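/- Let a > 0, α ∈ (0,1], η > 0. Define the one-dimensional LocalMuon recursion with two clients and loss functions f₁(x) = x²/2 and f₂(x) = (x+a)²/2, initialized at x⁽⁰⁾ = −a/4 with momenta m₁⁽⁰⁾ = m₂⁽⁰⁾ = 0, and updated by m₁⁽ʳ⁺¹⁾ = (1−α)m₁⁽ʳ⁾ + α·x⁽ʳ⁾, m₂⁽ʳ⁺¹⁾ = (1−α)m₂⁽ʳ⁾ + α·(x⁽ʳ⁾+a), x⁽ʳ⁺¹⁾ = x⁽ʳ⁾ − (η/2)·(sign(m₁⁽ʳ⁺¹⁾) + sign(m₂⁽ʳ⁺¹⁾)). Then for every r ≥ 0: x⁽ʳ⁾ = −a/4, m₁⁽ʳ⁾ = −(a/4)·(1 − (1−α)ʳ) and m₂⁽ʳ⁾ = (3a/4)·(1 − (1−α)ʳ); consequently, for every r ≥ 1, sign(m₁⁽ʳ⁾) + sign(m₂⁽ʳ⁾) = 0. -/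

import Mathlib

/-!
The momenta are exponential moving averages of the client gradients, and as long as the
iterate sits at `-a/4` these gradients are the constants `-a/4` and `3a/4`. Their moving
averages then keep the signs `-1` and `+1`, which cancel in the averaged LMO step, so the
iterate never moves.
-/

theorem Real.sign_mul_of_pos (c : ℝ) {t : ℝ} (ht : 0 < t) : Real.sign (c * t) = Real.sign c := by
  rcases lt_trichotomy c 0 with hc | rfl | hc
  · rw [Real.sign_of_neg hc, Real.sign_of_neg (mul_neg_of_neg_of_pos hc ht)]
  · rw [zero_mul]
  · rw [Real.sign_of_pos hc, Real.sign_of_pos (mul_pos hc ht)]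

theorem one_sub_one_sub_pow_pos {α : ℝ} (hα₀ : 0 < α) (hα₁ : α ≤ 1) {r : ℕ} (hr : r ≠ 0) :
    0 < 1 - (1 - α) ^ r := by
  have := pow_lt_one₀ (sub_nonneg.2 hα₁) (sub_lt_self 1 hα₀) hr
  linarith

theorem localMuon_iterates_stagnate_general (a α η : ℝ) (ha : 0 < a) (hα : α ∈ Set.Ioc (0 : ℝ) 1)
    (x m₁ m₂ : ℕ → ℝ)
    (hx0 : x 0 = -a / 4) (hm₁0 : m₁ 0 = 0) (hm₂0 : m₂ 0 = 0)
    (hm₁ : ∀ r, m₁ (r + 1) = (1 - α) * m₁ r + α * x r)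
    (hm₂ : ∀ r, m₂ (r + 1) = (1 - α) * m₂ r + α * (x r + a))
    (hx : ∀ r, x (r + 1) =
      x r - (η / 2) * (Real.sign (m₁ (r + 1)) + Real.sign (m₂ (r + 1)))) :
    (∀ r, x r = -a / 4) ∧
    (∀ r, m₁ r = -(a / 4) * (1 - (1 - α) ^ r)) ∧
    (∀ r, m₂ r = (3 * a / 4) * (1 - (1 - α) ^ r)) ∧
    (∀ r, 1 ≤ r → Real.sign (m₁ r) + Real.sign (m₂ r) = 0) := by
  have hsigns : ∀ r ≠ 0,
      Real.sign (-(a / 4) * (1 - (1 - α) ^ r)) + Real.sign (3 * a / 4 * (1 - (1 - α) ^ r)) = 0 := by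
    intro r hr
    have hpos := one_sub_one_sub_pow_pos hα.1 hα.2 hr
    rw [Real.sign_mul_of_pos _ hpos, Real.sign_mul_of_pos _ hpos,
      Real.sign_of_neg (by linarith), Real.sign_of_pos (by linarith)]
    norm_num
  have hclosed : ∀ r, x r = -a / 4 ∧ m₁ r = -(a / 4) * (1 - (1 - α) ^ r) ∧
      m₂ r = (3 * a / 4) * (1 - (1 - α) ^ r) := by
    intro r
    induction r with
    | zero => simp [hx0, hm₁0, hm₂0]
    | succ r ih =>
      obtain ⟨hxr, hm₁r, hm₂r⟩ := ih
      have hm₁succ : m₁ (r + 1) = -(a / 4) * (1 - (1 - α) ^ (r + 1)) := by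
        rw [hm₁, hm₁r, hxr]; ring
      have hm₂succ : m₂ (r + 1) = (3 * a / 4) * (1 - (1 - α) ^ (r + 1)) := by
        rw [hm₂, hm₂r, hxr]; ring
      refine ⟨?_, hm₁succ, hm₂succ⟩
      rw [hx, hm₁succ, hm₂succ, hsigns _ r.succ_ne_zero, hxr, mul_zero, sub_zero]
  refine ⟨fun r => (hclosed r).1, fun r => (hclosed r).2.1, fun r => (hclosed r).2.2, ?_⟩
  intro r hr
  rw [(hclosed r).2.1, (hclosed r).2.2]
  exact hsigns r (Nat.one_le_iff_ne_zero.1 hr)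

theorem localMuon_iterates_stagnate (a α η : ℝ) (ha : 0 < a) (hα : α ∈ Set.Ioc (0 : ℝ) 1)
    (hη : 0 < η) (x m₁ m₂ : ℕ → ℝ)
    (hx0 : x 0 = -a / 4) (hm₁0 : m₁ 0 = 0) (hm₂0 : m₂ 0 = 0)
    (hm₁ : ∀ r, m₁ (r + 1) = (1 - α) * m₁ r + α * x r)
    (hm₂ : ∀ r, m₂ (r + 1) = (1 - α) * m₂ r + α * (x r + a))
    (hx : ∀ r, x (r + 1) =
      x r - (η / 2) * (Real.sign (m₁ (r + 1)) + Real.sign (m₂ (r + 1)))) :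
    (∀ r, x r = -a / 4) ∧
    (∀ r, m₁ r = -(a / 4) * (1 - (1 - α) ^ r)) ∧
    (∀ r, m₂ r = (3 * a / 4) * (1 - (1 - α) ^ r)) ∧
    (∀ r, 1 ≤ r → Real.sign (m₁ r) + Real.sign (m₂ r) = 0) :=
  localMuon_iterates_stagnate_general a α η ha hα x m₁ m₂ hx0 hm₁0 hm₂0 hm₁ hm₂ hx
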